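/- arXiv:2007.00853 — 2 statements merged into one kernel-verified Lean document; each statement's English description precedes it below -/
import Mathlib

section
/- Let E be a countable directed graph and let v, w ∈ E⁰. Then lt₁(H(w, 0)) ⊆ H(v, 0) if and only if vE¹w ≠ ∅. -/
/-- A directed graph: a set of vertices, a set of edges, and range and source maps. -/
structure DirGraph where
  V : Type
  E : Type
  r : E → V
  s : E → V

namespace DirGraph

variable (G : DirGraph)

/-- The skew-product graph `E ×₁ ℤ`. -/
def skew : DirGraph where
  V := G.V × ℤ
  E := G.E × ℤ
  r := fun e => (G.r e.1, e.2 + 1)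
  s := fun e => (G.s e.1, e.2)

/-- `G.PathRel v w n` : there is a path of length `n` from `v` to `w`
(vertices are paths of length `0`). -/
inductive PathRel : G.V → G.V → ℕ → Prop
  | nil (v : G.V) : PathRel v v 0
  | cons (e : G.E) {w : G.V} {n : ℕ} : PathRel (G.r e) w n → PathRel (G.s e) w (n + 1)

/-- A set of vertices is hereditary if it contains the range of every edge whose
source it contains. -/
def Hereditary (H : Set G.V) : Prop := ∀ e : G.E, G.s e ∈ H → G.r e ∈ H

/-- `H(v, n)`: the smallest hereditary subset of `(E ×₁ ℤ)⁰` containing `(v, n)`. -/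
def Hgen (v : G.V) (n : ℤ) : Set (G.V × ℤ) :=
  ⋂₀ {K : Set (G.V × ℤ) | G.skew.Hereditary K ∧ (v, n) ∈ K}

/-- The translation action `lt_k(H) = {(v, n + k) : (v, n) ∈ H}`. -/
def lt (k : ℤ) (H : Set (G.V × ℤ)) : Set (G.V × ℤ) :=
  (fun p : G.V × ℤ => (p.1, p.2 + k)) '' H

/-- The hereditary set `H₀ = {(v, n) : v ∈ E⁰, n ≥ 0}`. -/
def H0 : Set (G.V × ℤ) := {p | 0 ≤ p.2}

/-- A graph is amplified if for all vertices `v, w` the set `vE¹w` of edges from `v`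
to `w` is empty or infinite. -/
def Amplified : Prop :=
  ∀ v w : G.V, {e : G.E | G.s e = v ∧ G.r e = w} = ∅ ∨ {e : G.E | G.s e = v ∧ G.r e = w}.Infinite

/-- A graph is connected if the smallest equivalence relation on the vertices containing
`{(s e, r e) : e ∈ E¹}` is everything. -/
def Connected : Prop :=
  ∀ v w : G.V, Relation.EqvGen (fun a b => ∃ e : G.E, G.s e = a ∧ G.r e = b) v w

/-- `L` has a unique predecessor in the poset of hereditary subsets of `(E ×₁ ℤ)⁰`. -/
def UniquePred (L : Set (G.V × ℤ)) : Prop :=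
  ∃ K : Set (G.V × ℤ), G.skew.Hereditary K ∧ K ⊂ L ∧
    ∀ K' : Set (G.V × ℤ), G.skew.Hereditary K' → K' ⊂ L → K' ⊆ K

/-- `ℋ_vert`: the hereditary subsets of `(E ×₁ ℤ)⁰` having a unique predecessor. -/
def HVert : Set (Set (G.V × ℤ)) := {L | G.skew.Hereditary L ∧ G.UniquePred L}

/-- `V₀ = {H(v, 0) : v ∈ E⁰}`. -/
def V0 : Set (Set (G.V × ℤ)) := {L | ∃ v : G.V, L = G.Hgen v 0}


theorem lt_hereditary (k : ℤ) {H : Set (G.V × ℤ)}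
    (hH : G.skew.Hereditary H) : G.skew.Hereditary (G.lt k H) := by
  rintro ⟨f, m⟩ hs
  obtain ⟨⟨v, n⟩, hvn, heq⟩ := hs
  have h1 : v = G.s f := congrArg Prod.fst heq
  have h2 : n + k = m := congrArg Prod.snd heq
  subst h1
  refine ⟨(G.r f, n + 1), hH (f, n) hvn, ?_⟩
  show ((G.r f : G.V), n + 1 + k) = (G.r f, m + 1)
  rw [Prod.ext_iff]
  exact ⟨rfl, by omega⟩

theorem H0_hereditary : G.skew.Hereditary G.H0 := by
  rintro ⟨f, m⟩ hm
  have : 0 ≤ m := hm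
  show 0 ≤ m + 1
  omega

/-- The hereditary subsets of the skew-product graph, as a type. -/
def HS := {L : Set (G.V × ℤ) // G.skew.Hereditary L}

/-- Translation on hereditary subsets of the skew product. -/
def ltH (k : ℤ) (A : G.HS) : G.HS := ⟨G.lt k A.1, G.lt_hereditary k A.2⟩

/-- `H₀` as an element of `G.HS`. -/
def H0H : G.HS := ⟨G.H0, G.H0_hereditary⟩

/-- The vertex set `Ē⁰` of the graph recovered from `(ℋ(E ×₁ ℤ), ⊆, lt, H₀)`. -/
def Ebar0 : Set (Set (G.V × ℤ)) := {L | L ∈ G.HVert ∧ L ⊆ G.H0 ∧ ¬ L ⊆ G.lt 1 G.H0}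

/-- The graph `Ē` recovered from `(ℋ(E ×₁ ℤ), ⊆, lt, H₀)`. -/
noncomputable def Ebar : DirGraph where
  V := G.Ebar0
  E := {t : Set (G.V × ℤ) × ℕ × Set (G.V × ℤ) //
          t.1 ∈ G.Ebar0 ∧ t.2.2 ∈ G.Ebar0 ∧ G.lt 1 t.2.2 ⊆ t.1}
  s := fun t => ⟨t.1.1, t.2.1⟩
  r := fun t => ⟨t.1.2.2, t.2.2.1⟩

end DirGraph

open DirGraph

namespace DirGraph

variable (G : DirGraph)

theorem pathRel_snoc (e : G.E) {v u : G.V} {n : ℕ} (h : G.PathRel v u n)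
    (hu : u = G.s e) : G.PathRel v (G.r e) (n + 1) := by
  induction h with
  | nil v => subst hu; exact PathRel.cons e (PathRel.nil _)
  | cons f h ih => exact PathRel.cons f (ih hu)

theorem pathRel_mem {K : Set (G.V × ℤ)} (hK : G.skew.Hereditary K)
    {v u : G.V} {m : ℕ} (h : G.PathRel v u m) :
    ∀ k : ℤ, (v, k) ∈ K → (u, k + m) ∈ K := by
  induction h with
  | nil v => intro k hk; simpa using hk
  | cons e h ih =>
    intro k hk
    have h1 : (G.r e, k + 1) ∈ K := hK (e, k) hk
    have h2 := ih (k + 1) h1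
    convert h2 using 2
    push_cast
    ring

theorem mem_hgen (v : G.V) (p : G.V × ℤ) :
    p ∈ G.Hgen v 0 ↔ ∃ m : ℕ, p.2 = m ∧ G.PathRel v p.1 m := by
  constructor
  · intro hp
    refine hp {q | ∃ m : ℕ, q.2 = m ∧ G.PathRel v q.1 m} ⟨?_, 0, rfl, PathRel.nil v⟩
    rintro ⟨f, k⟩ ⟨m, hm, hpath⟩
    exact ⟨m + 1, by simp [skew] at hm ⊢; omega, G.pathRel_snoc f hpath rfl⟩
  · rintro ⟨m, hm, hpath⟩ K ⟨hK, hvK⟩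
    have := G.pathRel_mem hK hpath 0 hvK
    simpa [← hm] using this

theorem pathRel_zero {a b : G.V} (h : G.PathRel a b 0) : a = b := by
  cases h; rfl

theorem pathRel_one {a b : G.V} (h : G.PathRel a b 1) :
    ∃ e : G.E, G.s e = a ∧ G.r e = b := by
  cases h with
  | cons e h' => exact ⟨e, rfl, G.pathRel_zero h'⟩

end DirGraph

theorem lt_one_hgen_subset_iff (G : DirGraph) [Countable G.V] [Countable G.E]
    (v w : G.V) :
    G.lt 1 (G.Hgen w 0) ⊆ G.Hgen v 0 ↔ {e : G.E | G.s e = v ∧ G.r e = w}.Nonempty := by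
  constructor
  · intro hsub
    have hw1 : ((w, (1 : ℤ)) : G.V × ℤ) ∈ G.lt 1 (G.Hgen w 0) :=
      ⟨(w, 0), (G.mem_hgen w (w, 0)).2 ⟨0, rfl, PathRel.nil w⟩, rfl⟩
    have := (G.mem_hgen v (w, 1)).1 (hsub hw1)
    obtain ⟨m, hm, hpath⟩ := this
    have hm1 : m = 1 := by simpa using hm.symm
    subst hm1
    obtain ⟨e, he1, he2⟩ := G.pathRel_one hpath
    exact ⟨e, he1, he2⟩
  · rintro ⟨e, hs, hr⟩
    rintro p ⟨⟨u', n'⟩, hmem, heq⟩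
    obtain ⟨m, hm, hpath⟩ := (G.mem_hgen w (u', n')).1 hmem
    subst heq
    refine (G.mem_hgen v _).2 ⟨m + 1, by simp at hm ⊢; omega, ?_⟩
    have : G.PathRel (G.s e) u' (m + 1) := PathRel.cons e (hr ▸ hpath)
    rwa [hs] at this
end

section
/- Let E be a countable directed graph and let v, w ∈ E⁰. Then vE*w ≠ ∅ (there is a path, possibly of length 0, from v to w) if and only if there exists n ∈ ℤ such that lt_n(H(w, 0)) ⊆ H(v, 0). -/
open DirGraph

theorem Hgen_hereditary (G : DirGraph) (v : G.V) (n : ℤ) :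
    G.skew.Hereditary (G.Hgen v n) := by
  intro e he K hK
  exact hK.1 e (he K hK)

theorem mem_Hgen_self (G : DirGraph) (v : G.V) (n : ℤ) : (v, n) ∈ G.Hgen v n :=
  fun _ hK => hK.2

theorem pathrel_mem_hered (G : DirGraph) {K : Set (G.V × ℤ)}
    (hK : G.skew.Hereditary K) {x u : G.V} {k : ℕ} (hp : G.PathRel x u k)
    {m : ℤ} (hx : (x, m) ∈ K) : (u, m + k) ∈ K := by
  induction hp generalizing m with
  | nil v => simpa using hx
  | cons e h ih =>
    have h1 : (G.r e, m + 1) ∈ K := hK (e, m) hx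
    have := ih h1
    convert this using 2
    push_cast; ring

theorem pathrel_append (G : DirGraph) {x u : G.V} {k : ℕ} (hp : G.PathRel x u k)
    (e : G.E) (he : G.s e = u) : G.PathRel x (G.r e) (k + 1) := by
  induction hp with
  | nil v => subst he; exact PathRel.cons e (PathRel.nil _)
  | cons f h ih => exact PathRel.cons f (ih he)

theorem Hgen_eq (G : DirGraph) (v : G.V) :
    G.Hgen v 0 = {p : G.V × ℤ | ∃ k : ℕ, p.2 = k ∧ G.PathRel v p.1 k} := by
  apply Set.Subset.antisymm
  · intro p hp
    apply hp
    constructor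
    · rintro ⟨f, m⟩ ⟨k, hk, hpath⟩
      simp only [skew] at hk hpath ⊢
      exact ⟨k + 1, by push_cast; omega, pathrel_append G hpath f rfl⟩
    · exact ⟨0, rfl, PathRel.nil v⟩
  · rintro ⟨u, m⟩ ⟨k, hk, hpath⟩
    simp only at hk
    subst hk
    simpa using pathrel_mem_hered G (Hgen_hereditary G v 0) hpath (mem_Hgen_self G v 0)

theorem pathrel_trans (G : DirGraph) {v w u : G.V} {k j : ℕ}
    (h1 : G.PathRel v w k) (h2 : G.PathRel w u j) : G.PathRel v u (k + j) := by
  induction h1 with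
  | nil v => simpa using h2
  | cons e h ih =>
    have := PathRel.cons e (ih h2)
    rwa [Nat.add_right_comm]

theorem path_iff_translate_subset (G : DirGraph) [Countable G.V] [Countable G.E]
    (v w : G.V) :
    (∃ k : ℕ, G.PathRel v w k) ↔ ∃ n : ℤ, G.lt n (G.Hgen w 0) ⊆ G.Hgen v 0 := by
  constructor
  · rintro ⟨k, hp⟩
    refine ⟨(k : ℤ), ?_⟩
    rintro p ⟨⟨u, m⟩, hmem, rfl⟩
    rw [Hgen_eq] at hmem ⊢
    obtain ⟨j, hj, hpath⟩ := hmem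
    exact ⟨k + j, by simp at hj ⊢; omega, pathrel_trans G hp hpath⟩
  · rintro ⟨n, hn⟩
    have : (w, (0 : ℤ) + n) ∈ G.Hgen v 0 := hn ⟨(w, 0), mem_Hgen_self G w 0, rfl⟩
    rw [Hgen_eq] at this
    obtain ⟨k, _, hpath⟩ := this
    exact ⟨k, hpath⟩
end
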